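/- If a behavioral strategy profile σ of the infinitely repeated game with perfect monitoring is a Blackwell SPNE above δ̲ < 1, then for every discount factor vector δ with δ_i ≥ δ̲ for all i and for every player i, the equilibrium payoff satisfies U_i(σ,δ) ≥ v̲_i^MI, where v̲_i^MI := min_{α ∈ 𝒜^MI} max_{a_i ∈ A_i} g_i(a_i, α_{-i}) (the minimum is attained since 𝒜^MI is nonempty and compact). -/

import Mathlib

open Finset

section StageGame

variable {I : Type*} [Fintype I] [DecidableEq I]
variable {A : I → Type*} [∀ i, Fintype (A i)] [∀ i, DecidableEq (A i)] [∀ i, Nonempty (A i)]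

/-- `α` is a profile of mixed actions: each component is a probability vector. -/
def IsMixed (α : ∀ i, A i → ℝ) : Prop :=
  ∀ i, (∀ a, 0 ≤ α i a) ∧ (∑ a, α i a) = 1

/-- The point mass on a pure action. -/
def pureAction {I : Type*} {A : I → Type*} [∀ i, DecidableEq (A i)] {i : I} (a : A i) :
    A i → ℝ := fun b => if b = a then 1 else 0

/-- The profile of point masses on a pure action profile. -/
def pureProfile (a : ∀ i, A i) : ∀ i, A i → ℝ := fun i => pureAction (a i)

/-- Multilinear extension of the reward function to mixed action profiles. -/
noncomputable def mixedPayoff (g : I → (∀ i, A i) → ℝ) (i : I) (α : ∀ j, A j → ℝ) : ℝ :=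
  ∑ a : ∀ j, A j, (∏ j, α j (a j)) * g i a

/-- Payoff to player `i` from playing the pure action `ai` against `α₋ᵢ`. -/
noncomputable def devPayoff (g : I → (∀ i, A i) → ℝ) (i : I) (α : ∀ j, A j → ℝ)
    (ai : A i) : ℝ :=
  mixedPayoff g i (Function.update α i (pureAction ai))

/-- The set `𝒜^MI` of myopically indifferent mixed action profiles. -/
def MIset (g : I → (∀ i, A i) → ℝ) : Set (∀ i, A i → ℝ) :=
  {α | IsMixed α ∧ ∀ i, ∀ ai : A i, 0 < α i ai → devPayoff g i α ai = mixedPayoff g i α}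

/-- Nash equilibrium of the stage game (in mixed strategies). -/
def IsStageNash (g : I → (∀ i, A i) → ℝ) (α : ∀ i, A i → ℝ) : Prop :=
  IsMixed α ∧ ∀ (i : I) (ai : A i), devPayoff g i α ai ≤ mixedPayoff g i α

end StageGame

section MinmaxMI

variable {I : Type*} [Fintype I] [DecidableEq I]
variable {A : I → Type*} [∀ i, Fintype (A i)] [∀ i, DecidableEq (A i)] [∀ i, Nonempty (A i)]

/-- The MI-minmax payoff `v̲ᵢ^MI` of player `i`: the infimum (attained, since `𝒜^MI` is
nonempty and compact) over myopically indifferent profiles `α` of the best reply payoff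
`max_{aᵢ} gᵢ(aᵢ, α₋ᵢ)`. -/
noncomputable def minmaxMI (g : I → (∀ i, A i) → ℝ) (i : I) : ℝ :=
  sInf {x : ℝ | ∃ α ∈ MIset g, x = ⨆ ai : A i, devPayoff g i α ai}

end MinmaxMI

section Repeated

variable {I : Type*} [Fintype I] [DecidableEq I]
variable {A : I → Type*} [∀ i, Fintype (A i)] [∀ i, DecidableEq (A i)] [∀ i, Nonempty (A i)]

/-- A behavioral strategy profile is valid if, after each history (a finite list of pure
action profiles, most recent first), every player's prescribed mixing is a probability
vector. -/
def ValidStrat (σ : ∀ i : I, List (∀ j, A j) → A i → ℝ) : Prop :=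
  ∀ i h, (∀ a, 0 ≤ σ i h a) ∧ (∑ a, σ i h a) = 1

/-- Probability of a finite history (most recent action profile first) under `σ`. -/
noncomputable def histProb (σ : ∀ i : I, List (∀ j, A j) → A i → ℝ) :
    List (∀ j, A j) → ℝ
  | [] => 1
  | a :: h => (∏ i, σ i h (a i)) * histProb σ h

/-- Expected reward of player `i` in round `t + 1` under `σ`. -/
noncomputable def expReward (g : I → (∀ i, A i) → ℝ)
    (σ : ∀ i : I, List (∀ j, A j) → A i → ℝ) (i : I) (t : ℕ) : ℝ :=
  ∑ v : Fin (t + 1) → (∀ j, A j), histProb σ (List.ofFn v) * g i (v 0)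

/-- Average discounted payoff of player `i` under `σ` at discount factor vector `δ`. -/
noncomputable def payoff (g : I → (∀ i, A i) → ℝ)
    (σ : ∀ i : I, List (∀ j, A j) → A i → ℝ) (δ : I → ℝ) (i : I) : ℝ :=
  (1 - δ i) * ∑' t : ℕ, δ i ^ t * expReward g σ i t

/-- `σ` is a Nash equilibrium of the repeated game at `δ`. -/
def IsNash (g : I → (∀ i, A i) → ℝ)
    (σ : ∀ i : I, List (∀ j, A j) → A i → ℝ) (δ : I → ℝ) : Prop :=
  ValidStrat σ ∧
    ∀ (i : I) (τ : List (∀ j, A j) → A i → ℝ),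
      (∀ h, (∀ a, 0 ≤ τ h a) ∧ (∑ a, τ h a) = 1) →
      payoff g (Function.update σ i τ) δ i ≤ payoff g σ δ i

/-- The continuation strategy profile after history `h`. -/
def contStrat (σ : ∀ i : I, List (∀ j, A j) → A i → ℝ) (h : List (∀ j, A j)) :
    ∀ i : I, List (∀ j, A j) → A i → ℝ :=
  fun i h' => σ i (h' ++ h)

/-- `σ` is a subgame-perfect Nash equilibrium at `δ`. -/
def IsSPNE (g : I → (∀ i, A i) → ℝ)
    (σ : ∀ i : I, List (∀ j, A j) → A i → ℝ) (δ : I → ℝ) : Prop :=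
  ∀ h : List (∀ j, A j), IsNash g (contStrat σ h) δ

/-- `σ` is a Blackwell SPNE above `δlow`: an SPNE at every discount factor vector all of
whose components lie in `[δlow, 1)`. -/
def IsBlackwellSPNE (g : I → (∀ i, A i) → ℝ)
    (σ : ∀ i : I, List (∀ j, A j) → A i → ℝ) (δlow : ℝ) : Prop :=
  ∀ δ : I → ℝ, (∀ i, δlow ≤ δ i ∧ δ i < 1) → IsSPNE g σ δ

end Repeated

/-!
In every subgame the continuation of a Blackwell SPNE is a Nash equilibrium for all discount
factors in `[δlow, 1)`. Averaging the deviations "play `aⱼ` now, then follow `σ`" over the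
first-round mixing `σⱼ(h)` recovers player `j`'s payoff, so every action in the support is
exactly as good as `σⱼ`. The payoff difference of such a deviation is a power series in the
discount factor, with bounded coefficients, that vanishes on `[δlow, 1)`; by the identity
theorem its constant term, the one-shot gain `gⱼ(aⱼ, σ₋ⱼ(h)) - gⱼ(σ(h))`, is zero. Hence `σ(h)`
is myopically indifferent after every history `h`. Now let player `i` best-reply myopically to
`σ₋ᵢ(h)` after every `h`: each round yields at least `v̲ᵢ^MI`, so the deviation earns at least
`v̲ᵢ^MI`, and by the equilibrium property so does `σ`.
-/

open Filter

section Analysis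

theorem eq_zero_of_tsum_pow_mul_eq_zero {d : ℕ → ℝ} {C a : ℝ} (hd : ∀ n, |d n| ≤ C)
    (ha : -1 ≤ a) (ha1 : a < 1) (hz : ∀ x ∈ Set.Ioo a 1, ∑' n, x ^ n * d n = 0) : d = 0 := by
  set p := FormalMultilinearSeries.ofScalars ℝ d
  have hr : 1 ≤ p.radius := by
    simpa using p.le_radius_of_bound C (r := 1) fun n => by simpa [p] using hd n
  have hp : HasFPowerSeriesOnBall p.sum p 0 1 :=
    (p.hasFPowerSeriesOnBall (one_pos.trans_le hr)).mono one_pos hr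
  have hball : Metric.eball (0 : ℝ) 1 = Set.Ioo (-1) 1 := by
    rw [← ENNReal.ofReal_one, Metric.eball_ofReal, Real.ball_eq_Ioo]; norm_num
  have hsum_zero : Set.EqOn p.sum 0 (Set.Ioo (-1) 1) := by
    rw [← hball]
    refine hp.analyticOnNhd.eqOn_zero_of_preconnected_of_eventuallyEq_zero
      (z₀ := (a + 1) / 2) ?_ ?_ ?_
    · rw [hball]; exact isPreconnected_Ioo
    · rw [hball]; constructor <;> linarith
    · filter_upwards [Ioo_mem_nhds (a := a) (b := 1) (by linarith) (by linarith)] with x hx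
      change FormalMultilinearSeries.ofScalarsSum d x = 0
      simpa [FormalMultilinearSeries.ofScalars_sum_eq, mul_comm] using hz x hx
  have hp_zero : p = 0 := hp.hasFPowerSeriesAt.eq_zero_of_eventually <|
    eventuallyEq_of_mem (Ioo_mem_nhds (by norm_num) (by norm_num)) hsum_zero
  exact (FormalMultilinearSeries.ofScalars_series_eq_zero ℝ).1 hp_zero

theorem summable_pow_mul_of_abs_le {c : ℕ → ℝ} {C x : ℝ} (hx : |x| < 1)
    (hc : ∀ t, |c t| ≤ C) : Summable fun t => x ^ t * c t := by
  refine .of_norm_bounded ((summable_geometric_of_lt_one (abs_nonneg x) hx).mul_right C)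
    fun t => ?_
  rw [Real.norm_eq_abs, abs_mul, abs_pow]
  exact mul_le_mul_of_nonneg_left (hc t) (pow_nonneg (abs_nonneg x) t)

theorem le_one_sub_mul_tsum_pow_mul {c : ℕ → ℝ} {C v x : ℝ} (hx0 : 0 ≤ x) (hx1 : x < 1)
    (hc : ∀ t, |c t| ≤ C) (hv : ∀ t, v ≤ c t) : v ≤ (1 - x) * ∑' t, x ^ t * c t := by
  have hgeom : ∑' t : ℕ, x ^ t * v = (1 - x)⁻¹ * v := by
    rw [tsum_mul_right, tsum_geometric_of_lt_one hx0 hx1]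
  have hle : ∑' t : ℕ, x ^ t * v ≤ ∑' t, x ^ t * c t :=
    Summable.tsum_le_tsum (fun t => mul_le_mul_of_nonneg_left (hv t) (pow_nonneg hx0 t))
      ((summable_geometric_of_lt_one hx0 hx1).mul_right v)
      (summable_pow_mul_of_abs_le (by rwa [abs_of_nonneg hx0]) hc)
  have hx : 0 < 1 - x := sub_pos.2 hx1
  calc v = (1 - x) * ∑' t : ℕ, x ^ t * v := by
        rw [hgeom, ← mul_assoc, mul_inv_cancel₀ hx.ne', one_mul]
    _ ≤ (1 - x) * ∑' t, x ^ t * c t := mul_le_mul_of_nonneg_left hle hx.le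

end Analysis

section Averages

variable {β : Type*} [Fintype β] {w f : β → ℝ}

theorem le_sum_mul_of_forall_le {c : ℝ} (hw : ∀ b, 0 ≤ w b) (hw1 : ∑ b, w b = 1)
    (hc : ∀ b, c ≤ f b) : c ≤ ∑ b, w b * f b :=
  calc c = ∑ b, w b * c := by rw [← Finset.sum_mul, hw1, one_mul]
    _ ≤ ∑ b, w b * f b := Finset.sum_le_sum fun b _ => mul_le_mul_of_nonneg_left (hc b) (hw b)

theorem abs_sum_mul_le {C : ℝ} (hw : ∀ b, 0 ≤ w b) (hw1 : ∑ b, w b = 1)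
    (hC : ∀ b, |f b| ≤ C) : |∑ b, w b * f b| ≤ C :=
  calc |∑ b, w b * f b| ≤ ∑ b, w b * |f b| := by
        refine (Finset.abs_sum_le_sum_abs _ _).trans_eq (Finset.sum_congr rfl fun b _ => ?_)
        rw [abs_mul, abs_of_nonneg (hw b)]
    _ ≤ ∑ b, w b * C := Finset.sum_le_sum fun b _ => mul_le_mul_of_nonneg_left (hC b) (hw b)
    _ = C := by rw [← Finset.sum_mul, hw1, one_mul]

theorem eq_of_sum_mul_eq_of_forall_le {c : ℝ} (hw : ∀ b, 0 ≤ w b) (hw1 : ∑ b, w b = 1)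
    (hc : ∀ b, f b ≤ c) (heq : ∑ b, w b * f b = c) {b : β} (hb : 0 < w b) : f b = c := by
  have hsum : ∑ b, w b * f b = ∑ b, w b * c := by rw [← Finset.sum_mul, hw1, one_mul, heq]
  have := (Finset.sum_eq_sum_iff_of_le fun b _ => mul_le_mul_of_nonneg_left (hc b) (hw b)).1
    hsum b (Finset.mem_univ b)
  exact mul_left_cancel₀ hb.ne' this

end Averages

theorem contStrat_nil {I : Type*} {A : I → Type*} (σ : ∀ i : I, List (∀ j, A j) → A i → ℝ) :
    contStrat σ [] = σ :=
  funext₂ fun _ h => congrArg _ (List.append_nil h)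

section Updates

variable {I : Type*} [DecidableEq I] {A : I → Type*}

theorem update_apply_history (σ : ∀ i : I, List (∀ j, A j) → A i → ℝ) (i : I)
    (τ : List (∀ j, A j) → A i → ℝ) (h : List (∀ j, A j)) :
    (fun j => Function.update σ i τ j h) = Function.update (fun j => σ j h) i (τ h) :=
  funext fun j => Function.apply_update (fun k (s : List (∀ j, A j) → A k → ℝ) => s h) σ i τ j

variable [∀ i, Fintype (A i)]

theorem ValidStrat.update {σ : ∀ i : I, List (∀ j, A j) → A i → ℝ} (hσ : ValidStrat σ) {i : I}
    {τ : List (∀ j, A j) → A i → ℝ} (hτ : ∀ h, (∀ a, 0 ≤ τ h a) ∧ ∑ a, τ h a = 1) :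
    ValidStrat (Function.update σ i τ) := by
  intro k h
  rcases eq_or_ne k i with rfl | hk
  · simpa using hτ h
  · simpa [hk] using hσ k h

end Updates

section RepeatedGame

variable {I : Type*} {A : I → Type*} [∀ i, Fintype (A i)]
  {σ : ∀ i : I, List (∀ j, A j) → A i → ℝ}

theorem IsMixed.nonempty {α : ∀ i, A i → ℝ} (hα : IsMixed α) (i : I) : Nonempty (A i) :=
  Finset.univ_nonempty_iff.1 <| Finset.nonempty_of_sum_ne_zero <| by
    rw [(hα i).2]; exact one_ne_zero

theorem ValidStrat.isMixed (hσ : ValidStrat σ) (h : List (∀ j, A j)) :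
    IsMixed fun j => σ j h :=
  fun j => hσ j h

variable [Fintype I]

theorem ValidStrat.histProb_nonneg (hσ : ValidStrat σ) (l : List (∀ j, A j)) :
    0 ≤ histProb σ l := by
  induction l with
  | nil => exact zero_le_one
  | cons b h ih => exact mul_nonneg (Finset.prod_nonneg fun j _ => (hσ j h).1 (b j)) ih

variable [DecidableEq I] {g : I → (∀ i, A i) → ℝ}

theorem IsMixed.sum_prod_eq_one {α : ∀ i, A i → ℝ} (hα : IsMixed α) :
    ∑ a : ∀ j, A j, ∏ j, α j (a j) = 1 := by
  rw [← Fintype.prod_sum]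
  exact Finset.prod_eq_one fun j _ => (hα j).2

theorem IsMixed.abs_mixedPayoff_le {α : ∀ i, A i → ℝ} (hα : IsMixed α) {i : I} {C : ℝ}
    (hC : ∀ a, |g i a| ≤ C) : |mixedPayoff g i α| ≤ C :=
  abs_sum_mul_le (fun a => Finset.prod_nonneg fun j _ => (hα j).1 (a j)) hα.sum_prod_eq_one hC

theorem sum_pi_fin_succ {X : Type*} [Fintype X] {t : ℕ} (F : (Fin (t + 1) → X) → ℝ) :
    ∑ v, F v = ∑ w : Fin t → X, ∑ a, F (Fin.cons a w) := by
  rw [← (Fin.consEquiv fun _ => X).sum_comp, Fintype.sum_prod_type, Finset.sum_comm]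
  rfl

theorem ValidStrat.sum_histProb_eq_one (hσ : ValidStrat σ) (t : ℕ) :
    ∑ w : Fin t → (∀ j, A j), histProb σ (List.ofFn w) = 1 := by
  induction t with
  | zero => simp [histProb]
  | succ t ih =>
    rw [sum_pi_fin_succ, ← ih]
    refine Finset.sum_congr rfl fun w _ => ?_
    simp only [List.ofFn_cons, histProb, ← Finset.sum_mul, (hσ.isMixed _).sum_prod_eq_one,
      one_mul]

theorem expReward_eq_sum (σ : ∀ i : I, List (∀ j, A j) → A i → ℝ) (i : I) (t : ℕ) :
    expReward g σ i t = ∑ w : Fin t → (∀ j, A j),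
      histProb σ (List.ofFn w) * mixedPayoff g i fun j => σ j (List.ofFn w) := by
  rw [expReward, sum_pi_fin_succ]
  refine Finset.sum_congr rfl fun w _ => ?_
  simp only [List.ofFn_cons, histProb, Fin.cons_zero, mixedPayoff, Finset.mul_sum]
  exact Finset.sum_congr rfl fun a _ => by ring

theorem expReward_zero (σ : ∀ i : I, List (∀ j, A j) → A i → ℝ) (i : I) :
    expReward g σ i 0 = mixedPayoff g i fun j => σ j [] := by
  simp [expReward_eq_sum, histProb]

theorem ValidStrat.abs_expReward_le (hσ : ValidStrat σ) {i : I} {C : ℝ}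
    (hC : ∀ a, |g i a| ≤ C) (t : ℕ) : |expReward g σ i t| ≤ C := by
  rw [expReward_eq_sum]
  exact abs_sum_mul_le (fun _ => hσ.histProb_nonneg _) (hσ.sum_histProb_eq_one t)
    fun _ => (hσ.isMixed _).abs_mixedPayoff_le hC

theorem ValidStrat.le_expReward (hσ : ValidStrat σ) {i : I} {c : ℝ}
    (hc : ∀ h, c ≤ mixedPayoff g i fun j => σ j h) (t : ℕ) : c ≤ expReward g σ i t := by
  rw [expReward_eq_sum]
  exact le_sum_mul_of_forall_le (fun _ => hσ.histProb_nonneg _) (hσ.sum_histProb_eq_one t)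
    fun _ => hc _

theorem ValidStrat.summable_expReward (hσ : ValidStrat σ) (i : I) {x : ℝ} (hx : |x| < 1) :
    Summable fun t => x ^ t * expReward g σ i t :=
  have ⟨_, hC⟩ := Finite.exists_le fun a => |g i a|
  summable_pow_mul_of_abs_le hx (hσ.abs_expReward_le hC)

theorem ValidStrat.le_payoff (hσ : ValidStrat σ) {δ : I → ℝ} {i : I} (hδ0 : 0 ≤ δ i)
    (hδ1 : δ i < 1) {c : ℝ} (hc : ∀ h, c ≤ mixedPayoff g i fun j => σ j h) :
    c ≤ payoff g σ δ i :=
  have ⟨_, hC⟩ := Finite.exists_le fun a => |g i a|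
  le_one_sub_mul_tsum_pow_mul hδ0 hδ1 (hσ.abs_expReward_le hC) (hσ.le_expReward hc)

end RepeatedGame

section PureActions

variable {I : Type*} {A : I → Type*} [∀ i, DecidableEq (A i)]

theorem pureAction_nonneg {i : I} (a b : A i) : 0 ≤ pureAction a b := by
  unfold pureAction; positivity

def firstDeviation (σ : ∀ i : I, List (∀ j, A j) → A i → ℝ) (j : I) (a : A j) :
    List (∀ k, A k) → A j → ℝ
  | [] => pureAction a
  | h@(_ :: _) => σ j h

variable [∀ i, Fintype (A i)]

theorem sum_pureAction {i : I} (a : A i) : ∑ b, pureAction a b = 1 := by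
  simp [pureAction]

theorem ValidStrat.isProb_firstDeviation {σ : ∀ i : I, List (∀ j, A j) → A i → ℝ}
    (hσ : ValidStrat σ) (j : I) (a : A j) (h : List (∀ k, A k)) :
    (∀ b, 0 ≤ firstDeviation σ j a h b) ∧ ∑ b, firstDeviation σ j a h b = 1 := by
  cases h with
  | nil => exact ⟨pureAction_nonneg a, sum_pureAction a⟩
  | cons => exact hσ j _

variable [DecidableEq I]

theorem IsMixed.update_pureAction {α : ∀ i, A i → ℝ} (hα : IsMixed α) {i : I} (a : A i) :
    IsMixed (Function.update α i (pureAction a)) := by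
  intro k
  rcases eq_or_ne k i with rfl | hk
  · simpa using ⟨pureAction_nonneg a, sum_pureAction a⟩
  · simpa [hk] using hα k

end PureActions

section Deviations

variable {I : Type*} [Fintype I] [DecidableEq I] {A : I → Type*} [∀ i, Fintype (A i)]
  [∀ i, DecidableEq (A i)] {g : I → (∀ i, A i) → ℝ} {σ : ∀ i : I, List (∀ j, A j) → A i → ℝ}

theorem sum_mul_prod_update_pureAction (α : ∀ i, A i → ℝ) (j : I) (b : ∀ k, A k) :
    ∑ a : A j, α j a * ∏ k, Function.update α j (pureAction a) k (b k) = ∏ k, α k (b k) := by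
  have hprod : ∀ a : A j, ∏ k, Function.update α j (pureAction a) k (b k)
      = pureAction a (b j) * ∏ k ∈ Finset.univ.erase j, α k (b k) := by
    intro a
    rw [← Finset.mul_prod_erase _ _ (Finset.mem_univ j), Function.update_self]
    congr 1
    exact Finset.prod_congr rfl fun k hk => by
      rw [Function.update_of_ne (Finset.ne_of_mem_erase hk)]
  simp_rw [hprod, ← mul_assoc, ← Finset.sum_mul]
  rw [← Finset.mul_prod_erase _ _ (Finset.mem_univ j)]
  congr 1
  simp [pureAction]

theorem ValidStrat.sum_mul_histProb_firstDeviation (hσ : ValidStrat σ) (j : I)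
    (l : List (∀ k, A k)) :
    ∑ a, σ j [] a * histProb (Function.update σ j (firstDeviation σ j a)) l = histProb σ l := by
  induction l with
  | nil => simpa [histProb] using (hσ j []).2
  | cons b h ih =>
    cases h with
    | nil =>
      have hfirst : ∀ a k, Function.update σ j (firstDeviation σ j a) k []
          = Function.update (fun k => σ k []) j (pureAction a) k :=
        fun a k => congrFun (update_apply_history σ j _ []) k
      simpa only [histProb, hfirst, mul_one] using
        sum_mul_prod_update_pureAction (fun k => σ k []) j b
    | cons b' h' =>
      have hlater : ∀ a k, Function.update σ j (firstDeviation σ j a) k (b' :: h')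
          = σ k (b' :: h') := fun a k => by
        rcases eq_or_ne k j with rfl | hk
        · rw [Function.update_self]; rfl
        · rw [Function.update_of_ne hk]
      rw [histProb, ← ih, Finset.mul_sum]
      simp only [histProb, hlater]
      exact Finset.sum_congr rfl fun a _ => by ring

theorem ValidStrat.sum_mul_expReward_firstDeviation (hσ : ValidStrat σ) (j i : I) (t : ℕ) :
    ∑ a, σ j [] a * expReward g (Function.update σ j (firstDeviation σ j a)) i t
      = expReward g σ i t := by
  simp only [expReward, Finset.mul_sum, ← mul_assoc]
  rw [Finset.sum_comm]
  simp only [← Finset.sum_mul, hσ.sum_mul_histProb_firstDeviation]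

theorem ValidStrat.sum_mul_payoff_firstDeviation (hσ : ValidStrat σ) (j i : I) {δ : I → ℝ}
    (hδ : |δ i| < 1) :
    ∑ a, σ j [] a * payoff g (Function.update σ j (firstDeviation σ j a)) δ i
      = payoff g σ δ i := by
  have hsummable : ∀ a, Summable fun t =>
      δ i ^ t * expReward g (Function.update σ j (firstDeviation σ j a)) i t :=
    fun a => (hσ.update (hσ.isProb_firstDeviation j a)).summable_expReward i hδ
  simp only [payoff, mul_left_comm (σ j [] _) (1 - δ i), ← Finset.mul_sum]
  congr 1
  simp only [← tsum_mul_left]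
  rw [← Summable.tsum_finsetSum fun a _ => (hsummable a).mul_left _]
  congr 1 with t
  rw [← hσ.sum_mul_expReward_firstDeviation j i t, Finset.mul_sum]
  exact Finset.sum_congr rfl fun a _ => by ring

theorem IsNash.payoff_firstDeviation_eq {δ : I → ℝ} (hN : IsNash g σ δ) {j : I}
    (hδ : |δ j| < 1) {a : A j} (ha : 0 < σ j [] a) :
    payoff g (Function.update σ j (firstDeviation σ j a)) δ j = payoff g σ δ j :=
  eq_of_sum_mul_eq_of_forall_le (hN.1 j []).1 (hN.1 j []).2
    (fun a => hN.2 j _ (hN.1.isProb_firstDeviation j a))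
    (hN.1.sum_mul_payoff_firstDeviation j j hδ) ha

theorem mem_MIset_of_forall_isNash {a : ℝ} (ha : -1 ≤ a) (ha1 : a < 1)
    (hN : ∀ x ∈ Set.Ioo a 1, IsNash g σ fun _ => x) : (fun j => σ j []) ∈ MIset g := by
  have hσ : ValidStrat σ := (hN ((a + 1) / 2) ⟨by linarith, by linarith⟩).1
  refine ⟨hσ.isMixed [], fun j aj haj => ?_⟩
  set σ' := Function.update σ j (firstDeviation σ j aj)
  have hσ' : ValidStrat σ' := hσ.update (hσ.isProb_firstDeviation j aj)
  obtain ⟨C, hC⟩ := Finite.exists_le fun b => |g j b|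
  set d := fun t => expReward g σ' j t - expReward g σ j t
  have hd : ∀ t, |d t| ≤ C + C := fun t =>
    (abs_sub _ _).trans (add_le_add (hσ'.abs_expReward_le hC t) (hσ.abs_expReward_le hC t))
  have hz : ∀ x ∈ Set.Ioo a 1, ∑' t, x ^ t * d t = 0 := by
    intro x hx
    have hx1 : |x| < 1 := abs_lt.2 ⟨by linarith [hx.1], hx.2⟩
    have heq := (hN x hx).payoff_firstDeviation_eq hx1 haj
    simp only [payoff] at heq
    simp only [d, mul_sub]
    rw [Summable.tsum_sub (hσ'.summable_expReward j hx1) (hσ.summable_expReward j hx1),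
      mul_left_cancel₀ (sub_ne_zero.2 hx.2.ne') heq, sub_self]
  have hd0 := congrFun (eq_zero_of_tsum_pow_mul_eq_zero hd ha ha1 hz) 0
  simp only [d, Pi.zero_apply, sub_eq_zero, expReward_zero, σ', update_apply_history] at hd0
  exact hd0

end Deviations

section Minmax

variable {I : Type*} [Fintype I] [DecidableEq I] {A : I → Type*} [∀ i, Fintype (A i)]
  [∀ i, DecidableEq (A i)] {g : I → (∀ i, A i) → ℝ}

theorem minmaxMI_le_iSup_devPayoff {α : ∀ i, A i → ℝ} (hα : α ∈ MIset g) (i : I) :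
    minmaxMI g i ≤ ⨆ a, devPayoff g i α a := by
  refine csInf_le ?_ ⟨α, hα, rfl⟩
  obtain ⟨C, hC⟩ := Finite.exists_le fun b => |g i b|
  refine ⟨-C, ?_⟩
  rintro _ ⟨β, hβ, rfl⟩
  obtain ⟨a⟩ := hβ.1.nonempty i
  exact (neg_le_of_abs_le ((hβ.1.update_pureAction a).abs_mixedPayoff_le hC)).trans
    (le_ciSup (f := devPayoff g i β) (Finite.bddAbove_range _) a)

theorem ValidStrat.exists_myopicBestReply {σ : ∀ i : I, List (∀ j, A j) → A i → ℝ}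
    (hσ : ValidStrat σ) (i : I) :
    ∃ τ : List (∀ j, A j) → A i → ℝ, (∀ h, (∀ a, 0 ≤ τ h a) ∧ ∑ a, τ h a = 1) ∧
      ∀ h, (⨆ a, devPayoff g i (fun j => σ j h) a)
        ≤ mixedPayoff g i fun j => Function.update σ i τ j h := by
  have := (hσ.isMixed []).nonempty i
  choose best hbest using fun h => Finite.exists_max (devPayoff g i fun j => σ j h)
  refine ⟨fun h => pureAction (best h), fun h => ⟨pureAction_nonneg _, sum_pureAction _⟩,
    fun h => ?_⟩
  rw [update_apply_history]
  exact ciSup_le (hbest h)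

end Minmax

theorem blackwell_spne_payoff_ge_minmaxMI_general
    {I : Type*} [Fintype I] [DecidableEq I]
    {A : I → Type*} [∀ i, Fintype (A i)] [∀ i, DecidableEq (A i)]
    (g : I → (∀ i, A i) → ℝ)
    (σ : ∀ i : I, List (∀ j, A j) → A i → ℝ)
    (δlow : ℝ) (h0 : 0 ≤ δlow) (h1 : δlow < 1)
    (hB : IsBlackwellSPNE g σ δlow) :
    ∀ δ : I → ℝ, (∀ i, δlow ≤ δ i ∧ δ i < 1) →
      ∀ i : I, minmaxMI g i ≤ payoff g σ δ i := by
  intro δ hδ i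
  have hNash : IsNash g σ δ := contStrat_nil σ ▸ hB δ hδ []
  have hMI : ∀ h, (fun j => σ j h) ∈ MIset g := fun h =>
    mem_MIset_of_forall_isNash (σ := contStrat σ h) (by linarith) h1 fun x hx =>
      hB (fun _ => x) (fun _ => ⟨hx.1.le, hx.2⟩) h
  obtain ⟨τ, hτ, hτ_best⟩ := hNash.1.exists_myopicBestReply (g := g) i
  calc minmaxMI g i ≤ payoff g (Function.update σ i τ) δ i :=
        (hNash.1.update hτ).le_payoff (h0.trans (hδ i).1) (hδ i).2 fun h =>
          (minmaxMI_le_iSup_devPayoff (hMI h) i).trans (hτ_best h)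
    _ ≤ payoff g σ δ i := hNash.2 i τ hτ

/-- The payoff of a Blackwell SPNE, at any admissible discount factor
vector, is at least the MI-minmax payoff of each player. -/
theorem blackwell_spne_payoff_ge_minmaxMI
    {I : Type*} [Fintype I] [DecidableEq I]
    {A : I → Type*} [∀ i, Fintype (A i)] [∀ i, DecidableEq (A i)] [∀ i, Nonempty (A i)]
    (g : I → (∀ i, A i) → ℝ)
    (σ : ∀ i : I, List (∀ j, A j) → A i → ℝ)
    (δlow : ℝ) (h0 : 0 ≤ δlow) (h1 : δlow < 1)
    (hB : IsBlackwellSPNE g σ δlow) :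
    ∀ δ : I → ℝ, (∀ i, δlow ≤ δ i ∧ δ i < 1) →
      ∀ i : I, minmaxMI g i ≤ payoff g σ δ i :=
  blackwell_spne_payoff_ge_minmaxMI_general g σ δlow h0 h1 hB
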